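/- Let n ≥ 5 be an integer and x ≥ 0 a real number. Then the third central moment of the second-order modified Baskakov–Durrmeyer operator satisfies V̂_{n,2}((t−x)³; x) = (1/((n−2)(n−3)(n−4)))·[n(−12x − 36x² − 24x³) − 21 − 150x − 324x² − 216x³], where the operator is applied to the function t ↦ (t − x)³. -/

import Mathlib

open MeasureTheory Filter Topology

/-- Baskakov basis function `p_{n,k}(x) = C(n+k-1, k) x^k / (1+x)^{n+k}`. -/
noncomputable def bask (n k : ℕ) (x : ℝ) : ℝ :=
  (Nat.choose (n + k - 1) k : ℝ) * x ^ k / (1 + x) ^ (n + k)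

/-- Second-order modified basis
`p^2_{n,k}(x) = (3/2 + 2x - n x(1+x)) p_{n+2,k}(x) + 2n x(1+x) p_{n+2,k-1}(x)
  + (-1/2 - 2x - n x(1+x)) p_{n+2,k-2}(x)`, with `p_{n+2,j} = 0` for `j < 0`. -/
noncomputable def p2 (n k : ℕ) (x : ℝ) : ℝ :=
  (3 / 2 + 2 * x - (n : ℝ) * x * (1 + x)) * bask (n + 2) k x
    + 2 * (n : ℝ) * x * (1 + x) * (if k = 0 then 0 else bask (n + 2) (k - 1) x)
    + (-(1 / 2) - 2 * x - (n : ℝ) * x * (1 + x)) * (if k < 2 then 0 else bask (n + 2) (k - 2) x)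

/-- Second-order modified Baskakov–Durrmeyer operator. -/
noncomputable def V2 (n : ℕ) (f : ℝ → ℝ) (x : ℝ) : ℝ :=
  ((n : ℝ) - 1) * ∑' k : ℕ, p2 n k x * ∫ t in Set.Ioi (0 : ℝ), bask n k t * f t

/-!
The identity `n t p_{n+1,k}(t) = (k+1) p_{n,k+1}(t)` does double duty. Integrated in `t`, it
reduces the moments `∫ tʲ p_{n,k}(t) dt` to the Beta integral `∫ p_{n,k} = 1/(n-1)`, so
`k ↦ ∫ p_{n,k}(t) (t-x)³ dt` is a cubic polynomial in `k`. Summed over `k`, it gives the factorial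
moments `∑ₖ p_{N+1,k}(x) C(k,j) = C(N+j,j) xʲ`, and Newton's forward-difference formula expresses
the sum of any cubic against `p_{N+1,k}(x)` through them. After re-indexing the three shifted
copies of `p_{n+2,·}` in the modified basis, the operator is such a sum, and the claim becomes an
identity of rational functions in `n` and `x`.
-/

open Set Finset Polynomial
open scoped fwdDiff Nat

theorem pow_le_one_add_pow {t : ℝ} (ht : 0 ≤ t) {a c : ℕ} (h : a ≤ c) : t ^ a ≤ (1 + t) ^ c :=
  (pow_le_pow_left₀ ht (by linarith) a).trans (pow_le_pow_right₀ (by linarith) h)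

theorem tendsto_pow_div_one_add_pow_atTop {a b : ℕ} (h : a < b) :
    Tendsto (fun t : ℝ => t ^ a / (1 + t) ^ b) atTop (𝓝 0) := by
  have hinv : Tendsto (fun t : ℝ => (1 + t)⁻¹) atTop (𝓝 0) :=
    tendsto_inv_atTop_zero.comp (tendsto_atTop_add_const_left _ 1 tendsto_id)
  refine squeeze_zero' ?_ ?_ hinv
  · filter_upwards [eventually_ge_atTop 0] with t ht
    positivity
  · filter_upwards [eventually_ge_atTop 0] with t ht
    rw [div_le_iff₀ (by positivity), ← Nat.sub_add_cancel (by omega : 1 ≤ b), pow_succ,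
      mul_comm, mul_inv_cancel_right₀ (by positivity)]
    exact pow_le_one_add_pow ht (by omega)

theorem integrableOn_Ioi_pow_div_one_add_pow {a b : ℕ} (h : a + 2 ≤ b) :
    IntegrableOn (fun t : ℝ => t ^ a / (1 + t) ^ b) (Ioi 0) := by
  have hderiv : ∀ t ∈ Ici (0 : ℝ), HasDerivAt (fun t => -(1 + t)⁻¹) ((1 + t) ^ 2)⁻¹ t := by
    intro t (ht : 0 ≤ t)
    refine (((hasDerivAt_id t).const_add 1).inv (by positivity)).neg.congr_deriv ?_
    simp only [id, neg_div, neg_neg, one_div]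
  have hlim : Tendsto (fun t : ℝ => -(1 + t)⁻¹) atTop (𝓝 0) := by
    simpa using (tendsto_pow_div_one_add_pow_atTop (a := 0) (b := 1) one_pos).neg
  have hdom : IntegrableOn (fun t : ℝ => ((1 + t) ^ 2)⁻¹) (Ioi 0) :=
    integrableOn_Ioi_deriv_of_nonneg' hderiv (fun t _ => by positivity) hlim
  refine hdom.mono' ?_ ?_
  · refine ContinuousOn.aestronglyMeasurable ?_ measurableSet_Ioi
    exact continuousOn_id.pow a |>.div (by fun_prop) fun t (ht : 0 < t) => by positivity
  · filter_upwards [ae_restrict_mem measurableSet_Ioi] with t (ht : 0 < t)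
    rw [Real.norm_of_nonneg (by positivity), div_le_iff₀ (by positivity),
      ← Nat.sub_add_cancel (by omega : 2 ≤ b), pow_add, mul_comm _ ((1 + t) ^ 2),
      inv_mul_cancel_left₀ (by positivity)]
    exact pow_le_one_add_pow ht.le (by omega)

theorem hasDerivAt_one_add_pow (n : ℕ) (t : ℝ) :
    HasDerivAt (fun t : ℝ => (1 + t) ^ n) (n * (1 + t) ^ (n - 1)) t := by
  simpa using ((hasDerivAt_id t).const_add 1).fun_pow n

theorem integral_Ioi_pow_div_one_add_pow (a c : ℕ) :
    ∫ t in Ioi (0 : ℝ), t ^ a / (1 + t) ^ (a + c + 2) = a ! * c ! / (a + c + 1)! := by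
  induction a with
  | zero =>
    have hderiv : ∀ t ∈ Ici (0 : ℝ), HasDerivAt (fun t : ℝ => -((1 + t) ^ (c + 1))⁻¹ / (c + 1))
        (t ^ 0 / (1 + t) ^ (0 + c + 2)) t := by
      intro t (ht : 0 ≤ t)
      refine (((hasDerivAt_one_add_pow (c + 1) t).inv (by positivity)).neg.div_const
        ((c : ℝ) + 1)).congr_deriv ?_
      rw [Nat.add_sub_cancel, zero_add, show c + 2 = c + 1 + 1 by omega]
      push_cast
      field_simp
      ring
    have hlim : Tendsto (fun t : ℝ => -((1 + t) ^ (c + 1))⁻¹ / (c + 1)) atTop (𝓝 0) := by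
      simpa using (tendsto_pow_div_one_add_pow_atTop (a := 0) (b := c + 1)
        (by omega)).neg.div_const ((c : ℝ) + 1)
    rw [integral_Ioi_of_hasDerivAt_of_tendsto' hderiv
      (integrableOn_Ioi_pow_div_one_add_pow (by omega)) hlim]
    simp [Nat.factorial_succ]
    field_simp
  | succ a ih =>
    have hderiv : ∀ t ∈ Ici (0 : ℝ), HasDerivAt (fun t => t ^ (a + 1) / (1 + t) ^ (a + c + 2))
        ((a + 1) * (t ^ a / (1 + t) ^ (a + c + 2))
          - (a + c + 2) * (t ^ (a + 1) / (1 + t) ^ (a + 1 + c + 2))) t := by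
      intro t (ht : 0 ≤ t)
      refine ((hasDerivAt_pow (a + 1) t).div (hasDerivAt_one_add_pow (a + c + 2) t)
        (by positivity)).congr_deriv ?_
      rw [Nat.add_sub_cancel, show a + c + 2 - 1 = a + c + 1 by omega,
        show a + 1 + c + 2 = a + c + 1 + 2 by omega]
      push_cast
      field_simp
      ring
    have hint₀ := integrableOn_Ioi_pow_div_one_add_pow (a := a) (b := a + c + 2) (by omega)
    have hint₁ := integrableOn_Ioi_pow_div_one_add_pow (a := a + 1) (b := a + 1 + c + 2)
      (by omega)
    have hIBP := integral_Ioi_of_hasDerivAt_of_tendsto' hderiv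
      ((hint₀.const_mul _).sub (hint₁.const_mul _))
      (tendsto_pow_div_one_add_pow_atTop (by omega))
    rw [integral_sub (hint₀.const_mul _) (hint₁.const_mul _), integral_const_mul,
      integral_const_mul, ih, zero_pow a.succ_ne_zero, zero_div, sub_zero] at hIBP
    rw [show a + 1 + c + 1 = (a + c + 1) + 1 by omega, Nat.factorial_succ (a + c + 1),
      Nat.factorial_succ a]
    push_cast
    field_simp at hIBP
    rw [eq_div_iff (by positivity)]
    linear_combination -hIBP

theorem natCast_mul_mul_bask_succ (n k : ℕ) (t : ℝ) :
    n * t * bask (n + 1) k t = (k + 1) * bask n (k + 1) t := by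
  have h := congrArg (Nat.cast (R := ℝ)) (Nat.choose_succ_right_eq (n + k) k)
  rw [Nat.add_sub_cancel] at h
  push_cast at h
  rw [bask, bask, show n + 1 + k - 1 = n + k by omega, show n + (k + 1) - 1 = n + k by omega,
    show n + (k + 1) = n + 1 + k by omega, pow_succ]
  generalize (1 + t) ^ (n + 1 + k) = D
  linear_combination -(t ^ k * t / D) * h

theorem integrableOn_pow_mul_bask {n j : ℕ} (h : j + 2 ≤ n) (k : ℕ) :
    IntegrableOn (fun t => t ^ j * bask n k t) (Ioi 0) := by
  refine IntegrableOn.congr_fun ((integrableOn_Ioi_pow_div_one_add_pow (a := j + k) (b := n + k)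
    (by omega)).const_mul ((n + k - 1).choose k : ℝ)) (fun t _ => ?_) measurableSet_Ioi
  simp only [bask, pow_add]
  ring

theorem integral_bask {n : ℕ} (hn : 2 ≤ n) (k : ℕ) :
    ∫ t in Ioi (0 : ℝ), bask n k t = 1 / (n - 1) := by
  obtain ⟨m, rfl⟩ : ∃ m, n = m + 2 := ⟨n - 2, by omega⟩
  have hfac := congrArg (Nat.cast (R := ℝ))
    (Nat.choose_mul_factorial_mul_factorial (show k ≤ k + m + 1 by omega))
  rw [show k + m + 1 - k = m + 1 by omega, Nat.factorial_succ m] at hfac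
  push_cast at hfac
  simp only [bask, mul_div_assoc, show m + 2 + k = k + m + 2 by omega]
  rw [integral_const_mul, integral_Ioi_pow_div_one_add_pow,
    show k + m + 2 - 1 = k + m + 1 by omega]
  push_cast
  rw [show (m : ℝ) + 2 - 1 = m + 1 by ring]
  field_simp
  linear_combination hfac

theorem integral_pow_mul_bask {n j : ℕ} (h : j + 2 ≤ n) (k : ℕ) :
    ∫ t in Ioi (0 : ℝ), t ^ j * bask n k t =
      (ascPochhammer ℝ j).eval ((k : ℝ) + 1) / (descPochhammer ℝ (j + 1)).eval ((n : ℝ) - 1) := by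
  induction j generalizing n k with
  | zero => simp [integral_bask h]
  | succ j ih =>
    obtain ⟨m, rfl⟩ : ∃ m, n = m + 1 := ⟨n - 1, by omega⟩
    have hm : (m : ℝ) ≠ 0 := by norm_cast; omega
    have hpt : ∀ t : ℝ,
        t ^ (j + 1) * bask (m + 1) k t = (k + 1) / m * (t ^ j * bask m (k + 1) t) := by
      intro t
      rw [div_mul_eq_mul_div, eq_div_iff hm]
      linear_combination t ^ j * natCast_mul_mul_bask_succ m k t
    simp_rw [hpt]
    rw [integral_const_mul, ih (by omega), div_mul_div_comm, ascPochhammer_succ_left ℝ j,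
      descPochhammer_succ_left ℝ (j + 1)]
    simp only [eval_mul, eval_X, eval_comp, eval_add, eval_sub, eval_one, Nat.cast_add,
      Nat.cast_one]
    ring_nf

theorem integral_bask_mul_sub_pow {n p : ℕ} (h : p + 2 ≤ n) (k : ℕ) (x : ℝ) :
    ∫ t in Ioi (0 : ℝ), bask n k t * (t - x) ^ p =
      ∑ j ∈ range (p + 1), p.choose j * (-x) ^ (p - j) * ((ascPochhammer ℝ j).eval ((k : ℝ) + 1)
        / (descPochhammer ℝ (j + 1)).eval ((n : ℝ) - 1)) := by
  have hexp : ∀ t : ℝ, bask n k t * (t - x) ^ p =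
      ∑ j ∈ range (p + 1), p.choose j * (-x) ^ (p - j) * (t ^ j * bask n k t) := by
    intro t
    rw [sub_eq_add_neg, add_pow, mul_sum]
    exact sum_congr rfl fun j _ => by ring
  simp_rw [hexp]
  rw [integral_finsetSum _ fun j hj =>
    (integrableOn_pow_mul_bask (by simp at hj; omega) k).const_mul _]
  refine sum_congr rfl fun j hj => ?_
  rw [integral_const_mul, integral_pow_mul_bask (by simp at hj; omega)]

theorem bask_succ_eq_choose_mul_div_pow (N k : ℕ) (x : ℝ) :
    bask (N + 1) k x = (k + N).choose N * (x / (1 + x)) ^ k / (1 + x) ^ (N + 1) := by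
  rw [bask, show N + 1 + k - 1 = k + N by omega, Nat.choose_symm_add, div_pow,
    show N + 1 + k = k + (N + 1) by omega, pow_add]
  field_simp

theorem hasSum_bask (N : ℕ) {x : ℝ} (hx : 0 ≤ x) : HasSum (fun k => bask (N + 1) k x) 1 := by
  have hx' : ‖x / (1 + x)‖ < 1 := by
    rw [Real.norm_eq_abs, abs_of_nonneg (by positivity), div_lt_one (by positivity)]
    linarith
  have h := (hasSum_choose_mul_geometric_of_norm_lt_one N hx').div_const ((1 + x) ^ (N + 1))
  have h1 : (1 : ℝ) - x / (1 + x) = (1 + x)⁻¹ := by field_simp; ring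
  simp only [h1, inv_pow, one_div, inv_inv,
    div_self (pow_ne_zero _ (by positivity : (1 + x) ≠ 0))] at h
  simpa only [bask_succ_eq_choose_mul_div_pow] using h

theorem hasSum_bask_mul_choose (N j : ℕ) {x : ℝ} (hx : 0 ≤ x) :
    HasSum (fun k => bask (N + 1) k x * k.choose j) ((N + j).choose j * x ^ j) := by
  induction j generalizing N with
  | zero => simpa using hasSum_bask N hx
  | succ j ih =>
    rw [← hasSum_nat_add_iff' 1]
    have hstep : ∀ k : ℕ, bask (N + 1) (k + 1) x * ((k + 1).choose (j + 1) : ℕ) =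
        (N + 1) * x / (j + 1) * (bask (N + 1 + 1) k x * k.choose j) := by
      intro k
      have hc := congrArg (Nat.cast (R := ℝ)) (Nat.add_one_mul_choose_eq k j)
      push_cast at hc
      have hb := natCast_mul_mul_bask_succ (N + 1) k x
      push_cast at hb
      rw [div_mul_eq_mul_div, eq_div_iff (by positivity)]
      linear_combination -(bask (N + 1) (k + 1) x) * hc - (k.choose j : ℝ) * hb
    have hval : ((N + 1 + j).choose j : ℝ) * x ^ j * ((N + 1) * x / (j + 1)) =
        ((N + (j + 1)).choose (j + 1) : ℕ) * x ^ (j + 1) := by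
      have hc := congrArg (Nat.cast (R := ℝ)) (Nat.choose_succ_right_eq (N + j + 1) j)
      rw [show N + j + 1 - j = N + 1 by omega] at hc
      push_cast at hc
      rw [show N + 1 + j = N + j + 1 by omega, ← add_assoc]
      field_simp
      linear_combination -(x ^ (j + 1)) * hc
    simp only [hstep, Finset.sum_range_one, Nat.choose_zero_succ, Nat.cast_zero, mul_zero,
      sub_zero]
    rw [← hval, mul_comm (_ * x ^ j)]
    exact (ih (N + 1)).mul_left _

theorem eq_sum_choose_smul_fwdDiff_iter {G : Type*} [AddCommGroup G] {f : ℕ → G} {d : ℕ}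
    (hf : Δ_[1] ^[d + 1] f = 0) (k : ℕ) :
    f k = ∑ j ∈ range (d + 1), k.choose j • Δ_[1] ^[j] f 0 := by
  have hvanish : ∀ j, d + 1 ≤ j → Δ_[1] ^[j] f = 0 := by
    intro j hj
    obtain ⟨i, rfl⟩ := Nat.exists_eq_add_of_le hj
    rw [add_comm, Function.iterate_add_apply, hf]
    exact Function.iterate_fixed (f := fwdDiff 1) (x := (0 : ℕ → G)) (fwdDiff_const 1 0) i
  have hnewton := shift_eq_sum_fwdDiff_iter 1 f k 0
  rw [zero_add, smul_eq_mul, mul_one] at hnewton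
  rw [hnewton, sum_subset (range_subset_range.2 (by omega : k + 1 ≤ k + d + 1)) ?choose_zero,
    ← sum_subset (range_subset_range.2 (by omega : d + 1 ≤ k + d + 1)) ?diff_zero]
  case choose_zero =>
    intro j _ hj
    rw [Nat.choose_eq_zero_of_lt (by simpa using hj), zero_smul]
  case diff_zero =>
    intro j _ hj
    rw [hvanish j (by simpa using hj), Pi.zero_apply, smul_zero]

theorem hasSum_bask_mul_of_fwdDiff_iter_eq_zero (N : ℕ) {x : ℝ} (hx : 0 ≤ x) {f : ℕ → ℝ}
    {d : ℕ} (hf : Δ_[1] ^[d + 1] f = 0) :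
    HasSum (fun k => bask (N + 1) k x * f k)
      (∑ j ∈ range (d + 1), (N + j).choose j * x ^ j * Δ_[1] ^[j] f 0) := by
  have h := hasSum_sum fun j (_ : j ∈ range (d + 1)) =>
    (hasSum_bask_mul_choose N j hx).mul_right (Δ_[1] ^[j] f 0)
  have hterm : (fun k => bask (N + 1) k x * f k) =
      fun k => ∑ j ∈ range (d + 1), bask (N + 1) k x * k.choose j * Δ_[1] ^[j] f 0 := by
    funext k
    rw [eq_sum_choose_smul_fwdDiff_iter hf k, mul_sum]
    simp only [nsmul_eq_mul, mul_assoc]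
  rw [hterm]
  exact h

theorem HasSum.ite_lt_sub {G : Type*} [AddCommGroup G] [TopologicalSpace G]
    [IsTopologicalAddGroup G] {f : ℕ → G} {s : G} (hf : HasSum f s) (i : ℕ) :
    HasSum (fun k => if k < i then 0 else f (k - i)) s := by
  rw [← hasSum_nat_add_iff' i]
  simpa [sum_eq_zero fun k hk => if_pos (mem_range.1 hk)] using hf

theorem hasSum_p2_mul (n : ℕ) (x : ℝ) {g : ℕ → ℝ} {s₀ s₁ s₂ : ℝ}
    (h₀ : HasSum (fun k => bask (n + 2) k x * g k) s₀)
    (h₁ : HasSum (fun k => bask (n + 2) k x * g (k + 1)) s₁)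
    (h₂ : HasSum (fun k => bask (n + 2) k x * g (k + 2)) s₂) :
    HasSum (fun k => p2 n k x * g k)
      ((3 / 2 + 2 * x - n * x * (1 + x)) * s₀ + 2 * n * x * (1 + x) * s₁
        + (-(1 / 2) - 2 * x - n * x * (1 + x)) * s₂) := by
  have h := ((h₀.mul_left (3 / 2 + 2 * x - n * x * (1 + x))).add
    ((h₁.ite_lt_sub 1).mul_left (2 * n * x * (1 + x)))).add
    ((h₂.ite_lt_sub 2).mul_left (-(1 / 2) - 2 * x - n * x * (1 + x)))
  refine (funext fun k => ?_ : (fun k => p2 n k x * g k) = _) ▸ h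
  rcases k with _ | _ | k <;> simp [p2] <;> ring

theorem integral_bask_mul_sub_pow_three (m k : ℕ) (x : ℝ) :
    ∫ t in Ioi (0 : ℝ), bask (m + 5) k t * (t - x) ^ 3 =
      ((k + 1) * (k + 2) * (k + 3) - 3 * x * (m + 1) * (k + 1) * (k + 2)
        + 3 * x ^ 2 * (m + 1) * (m + 2) * (k + 1) - x ^ 3 * (m + 1) * (m + 2) * (m + 3))
      / ((m + 1) * (m + 2) * (m + 3) * (m + 4)) := by
  rw [integral_bask_mul_sub_pow (by omega),
    show ((m + 5 : ℕ) : ℝ) - 1 = (m + 4 : ℕ) by push_cast; ring]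
  simp only [sum_range_succ, sum_range_zero, descPochhammer_eval_eq_descFactorial]
  simp [ascPochhammer_succ_eval, Nat.descFactorial_succ]
  field_simp
  ring

theorem V2_central_moment_three (n : ℕ) (hn : 5 ≤ n) (x : ℝ) (hx : 0 ≤ x) :
    V2 n (fun t => (t - x) ^ 3) x =
      (1 / (((n : ℝ) - 2) * ((n : ℝ) - 3) * ((n : ℝ) - 4))) *
        ((n : ℝ) * (-12 * x - 36 * x ^ 2 - 24 * x ^ 3)
          - 21 - 150 * x - 324 * x ^ 2 - 216 * x ^ 3) := by
  obtain ⟨m, rfl⟩ : ∃ m, n = m + 5 := ⟨n - 5, by omega⟩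
  set G : ℕ → ℝ := fun k => ∫ t in Ioi (0 : ℝ), bask (m + 5) k t * (t - x) ^ 3 with hG
  have hcubic : ∀ i, Δ_[1] ^[3 + 1] (fun k => G (k + i)) = 0 := by
    intro i
    funext k
    simp [hG, integral_bask_mul_sub_pow_three, fwdDiff_iter_eq_sum_shift, sum_range_succ,
      Nat.choose]
    ring
  have hsum i := hasSum_bask_mul_of_fwdDiff_iter_eq_zero (m + 6) hx (hcubic i)
  rw [show V2 (m + 5) (fun t => (t - x) ^ 3) x = (↑(m + 5) - 1) * ∑' k, p2 (m + 5) k x * G k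
    from rfl, (hasSum_p2_mul (m + 5) x (g := G) (hsum 0) (hsum 1) (hsum 2)).tsum_eq,
    show ((m + 5 : ℕ) : ℝ) - 2 = m + 3 by push_cast; ring,
    show ((m + 5 : ℕ) : ℝ) - 3 = m + 2 by push_cast; ring,
    show ((m + 5 : ℕ) : ℝ) - 4 = m + 1 by push_cast; ring]
  simp only [sum_range_succ, sum_range_zero, Nat.cast_choose_eq_descPochhammer_div]
  simp [hG, integral_bask_mul_sub_pow_three, fwdDiff, fwdDiff_iter_eq_sum_shift, sum_range_succ,
    Nat.choose, descPochhammer_succ_eval, Nat.factorial]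
  field_simp
  ring
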